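/- One-step regret bound for Q-Soft-Bayes: let η ∈ (0,1), let W_t be Hermitian positive definite with tr(W_t) ≤ 1, ρ_t = W_t/tr(W_t), let A_t be Hermitian positive semi-definite with tr(A_t ρ_t) > 0, and set W_{t+1} = exp(log W_t + log((1-η)I + η A_t/tr(A_t ρ_t))). Then for every density matrix ρ with tr(A_t ρ) > 0, (−log tr(A_t ρ_t)) − (−log tr(A_t ρ)) ≤ (1/η)·tr(ρ(log W_{t+1} − log W_t)) + tr(log W_{t+1} − log W_t) + D·η/(1-η). -/

import Mathlib

open Matrix BigOperators
open scoped ComplexOrder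

noncomputable def matFun {D : ℕ} (f : ℝ → ℝ) (A : Matrix (Fin D) (Fin D) ℂ) :
    Matrix (Fin D) (Fin D) ℂ :=
  if h : A.IsHermitian then
    (h.eigenvectorUnitary : Matrix (Fin D) (Fin D) ℂ) *
      Matrix.diagonal (fun i => (f (h.eigenvalues i) : ℂ)) *
      star (h.eigenvectorUnitary : Matrix (Fin D) (Fin D) ℂ)
  else 0

noncomputable def matLog {D : ℕ} : Matrix (Fin D) (Fin D) ℂ → Matrix (Fin D) (Fin D) ℂ :=
  matFun Real.log

noncomputable def matExp {D : ℕ} : Matrix (Fin D) (Fin D) ℂ → Matrix (Fin D) (Fin D) ℂ :=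
  matFun Real.exp

def IsDensity {D : ℕ} (ρ : Matrix (Fin D) (Fin D) ℂ) : Prop :=
  ρ.PosSemidef ∧ ρ.trace = 1

/-!
Since `matLog ∘ matExp` is the identity on Hermitian matrices, `log W' - log W` is the spectral
function `x ↦ log (1 - η + η x / c)` of `A`, where `c = tr (A ρt)`. Both traces are therefore sums
over the eigenvalues `μ i` of `A`, weighted by the probabilities `p i` of the outcomes of measuring
`ρ` in an eigenbasis of `A`, and with `t i = μ i / c` the claim is the scalar Soft-Bayes inequality
`η log (∑ p t) ≤ ∑ (p i + η) log (1 - η + η t i) + D η² / (1 - η)`.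
Its right side is concave in `t`, and `t` is the convex combination, with weights
`q i = p i t i / ∑ p t`, of the vertices `(∑ p t / p i) eᵢ` of `{t ≥ 0, ∑ p t = const}`. At a vertex
the bound follows from Jensen's inequality for `log`, `log x ≥ 1 - 1/x` and
`log (1 - η) ≥ -η / (1 - η)`.
-/

namespace Matrix.IsHermitian

variable {𝕜 n : Type*} [RCLike 𝕜] [Fintype n] [DecidableEq n] {A : Matrix n n 𝕜}

noncomputable def eigenWeight (hA : A.IsHermitian) (ρ : Matrix n n 𝕜) (i : n) : ℝ :=
  RCLike.re ((star (hA.eigenvectorUnitary : Matrix n n 𝕜) * ρ * hA.eigenvectorUnitary) i i)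

theorem re_trace_mul_cfc (hA : A.IsHermitian) (ρ : Matrix n n 𝕜) (f : ℝ → ℝ) :
    RCLike.re (ρ * cfc f A).trace = ∑ i, hA.eigenWeight ρ i * f (hA.eigenvalues i) := by
  rw [hA.cfc_eq, IsHermitian.cfc, Unitary.conjStarAlgAut_apply, ← mul_assoc, ← mul_assoc,
    trace_mul_cycle, ← mul_assoc]
  simp [Matrix.trace, Matrix.mul_diagonal, eigenWeight]

theorem re_trace_cfc (hA : A.IsHermitian) (f : ℝ → ℝ) :
    RCLike.re (cfc f A).trace = ∑ i, f (hA.eigenvalues i) := by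
  simpa [eigenWeight] using hA.re_trace_mul_cfc 1 f

theorem sum_eigenWeight (hA : A.IsHermitian) (ρ : Matrix n n 𝕜) :
    ∑ i, hA.eigenWeight ρ i = RCLike.re ρ.trace := by
  simpa [cfc_one ℝ A hA.isSelfAdjoint] using (hA.re_trace_mul_cfc ρ 1).symm

theorem eigenWeight_nonneg (hA : A.IsHermitian) {ρ : Matrix n n 𝕜} (hρ : ρ.PosSemidef) (i : n) :
    0 ≤ hA.eigenWeight ρ i :=
  (RCLike.nonneg_iff.mp
    (hρ.conjTranspose_mul_mul_same (hA.eigenvectorUnitary : Matrix n n 𝕜)).diag_nonneg).1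

theorem cfc_const_add_mul (hA : A.IsHermitian) (a b : ℝ) :
    cfc (fun x => a + b * x) A = (a : 𝕜) • (1 : Matrix n n 𝕜) + (b : 𝕜) • A := by
  rw [cfc_add .., cfc_const a A hA.isSelfAdjoint, cfc_const_mul .., cfc_id' ℝ A hA.isSelfAdjoint,
    Algebra.algebraMap_eq_smul_one, RCLike.real_smul_eq_coe_smul (K := 𝕜),
    RCLike.real_smul_eq_coe_smul (K := 𝕜)]

end Matrix.IsHermitian

section MatFun

variable {D : ℕ}

theorem matFun_eq_cfc (f : ℝ → ℝ) {A : Matrix (Fin D) (Fin D) ℂ} (hA : A.IsHermitian) :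
    matFun f A = cfc f A := by
  rw [matFun, dif_pos hA, hA.cfc_eq]
  rfl

theorem isHermitian_matFun (f : ℝ → ℝ) (A : Matrix (Fin D) (Fin D) ℂ) :
    (matFun f A).IsHermitian := by
  by_cases hA : A.IsHermitian
  · rw [matFun_eq_cfc f hA]
    exact cfc_predicate f A
  · rw [matFun, dif_neg hA]
    exact isHermitian_zero

theorem isHermitian_matLog (A : Matrix (Fin D) (Fin D) ℂ) : (matLog A).IsHermitian :=
  isHermitian_matFun _ A

theorem matFun_cfc (f g : ℝ → ℝ) {A : Matrix (Fin D) (Fin D) ℂ} (hA : A.IsHermitian) :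
    matFun f (cfc g A) = cfc (f ∘ g) A := by
  rw [matFun_eq_cfc f (cfc_predicate g A), ← cfc_comp' f g A
    ((A.finite_real_spectrum.image g).continuousOn f) (A.finite_real_spectrum.continuousOn g)]
  rfl

theorem matLog_matExp {K : Matrix (Fin D) (Fin D) ℂ} (hK : K.IsHermitian) :
    matLog (matExp K) = K := by
  rw [matLog, matExp, matFun_eq_cfc _ hK, matFun_cfc _ _ hK]
  simp only [Function.comp_def, Real.log_exp]
  exact cfc_id' ℝ K hK.isSelfAdjoint

end MatFun

section SoftBayesScalar

open Real Finset

variable {η : ℝ}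

theorem neg_div_one_sub_le_log_one_sub (hη : η < 1) : -(η / (1 - η)) ≤ log (1 - η) := by
  have h1η : 1 - η ≠ 0 := (sub_pos.mpr hη).ne'
  have h := one_sub_inv_le_log_of_pos (sub_pos.mpr hη)
  have e : 1 - (1 - η)⁻¹ = -(η / (1 - η)) := by field_simp; ring
  linarith

theorem mul_log_le_softBayes_vertex (hη0 : 0 < η) (hη1 : η < 1) {p B : ℝ} (hp : 0 < p)
    (hB : 0 < B) :
    η * log B ≤ (p + η) * log (1 - η + η * B / p) + (1 - p) * log (1 - η) + η ^ 2 / (1 - η) := by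
  have h1η : 0 < 1 - η := sub_pos.mpr hη1
  have hpη : 0 < p + η := by linarith
  set r := (p + η) / p with hr
  have hr0 : 0 < r := by positivity
  -- `1 - η + η B / p` is the `(p, η)`-weighted mean of `(1 - η) r` and `B r`.
  have hmean : p / (p + η) * ((1 - η) * r) + η / (p + η) * (B * r) = 1 - η + η * B / p := by
    rw [hr]; field_simp
  have hjensen := strictConcaveOn_log_Ioi.concaveOn.2 (x := (1 - η) * r) (y := B * r)
    (mul_pos h1η hr0) (mul_pos hB hr0) (by positivity : 0 ≤ p / (p + η))
    (by positivity : 0 ≤ η / (p + η)) (by field_simp)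
  simp only [smul_eq_mul, hmean, log_mul h1η.ne' hr0.ne', log_mul hB.ne' hr0.ne'] at hjensen
  have hratio : η / (p + η) ≤ log r := by
    have h := one_sub_inv_le_log_of_pos hr0
    rwa [hr, inv_div, one_sub_div hpη.ne', add_sub_cancel_left] at h
  have hscale : ∀ a b : ℝ, (p + η) * (p / (p + η) * a + η / (p + η) * b) = p * a + η * b := by
    intro a b; field_simp
  have hX := mul_le_mul_of_nonneg_left hjensen hpη.le
  have hr' := mul_le_mul_of_nonneg_left hratio hpη.le
  rw [hscale] at hX
  rw [mul_div_cancel₀ _ hpη.ne'] at hr'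
  have hL := neg_div_one_sub_le_log_one_sub hη1
  have e : η + η ^ 2 / (1 - η) = η / (1 - η) := by field_simp; ring
  linarith

theorem softBayes_coord_bound (hη0 : 0 < η) (hη1 : η < 1) {p t B q : ℝ} (hp : 0 ≤ p)
    (ht : 0 ≤ t) (hB : 0 < B) (hq0 : 0 ≤ q) (hq1 : q ≤ 1) (hqB : q * B = p * t) :
    q * (η * log B - (1 - p) * log (1 - η) - η ^ 2 / (1 - η)) + (1 - q) * (p + η) * log (1 - η)
      ≤ (p + η) * log (1 - η + η * t) := by
  have h1η : 0 < 1 - η := sub_pos.mpr hη1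
  have hlog_mono : log (1 - η) ≤ log (1 - η + η * t) :=
    log_le_log h1η (le_add_of_nonneg_right (mul_nonneg hη0.le ht))
  rcases hp.eq_or_lt with rfl | hp
  · obtain rfl : q = 0 := by simpa [hB.ne'] using hqB
    simpa using mul_le_mul_of_nonneg_left hlog_mono hη0.le
  -- `t` is the `(q, 1 - q)`-weighted mean of the vertex value `B / p` and `0`.
  have hmean : q * (1 - η + η * B / p) + (1 - q) * (1 - η) = 1 - η + η * t := by
    have ht' : t = q * B / p := by field_simp; linarith
    rw [ht']; field_simp; ring
  have hjensen := strictConcaveOn_log_Ioi.concaveOn.2 (x := 1 - η + η * B / p) (y := 1 - η)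
    (by simp only [Set.mem_Ioi]; positivity) h1η hq0 (sub_nonneg.mpr hq1) (by ring)
  simp only [smul_eq_mul, hmean] at hjensen
  have hvertex := mul_le_mul_of_nonneg_left (mul_log_le_softBayes_vertex hη0 hη1 hp hB) hq0
  have hX := mul_le_mul_of_nonneg_left hjensen (by positivity : 0 ≤ p + η)
  linarith

theorem mul_log_sum_le_softBayes {ι : Type*} [Fintype ι] (hη0 : 0 < η) (hη1 : η < 1)
    {p t : ι → ℝ} (hp : ∀ i, 0 ≤ p i) (hp1 : ∑ i, p i = 1) (ht : ∀ i, 0 ≤ t i)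
    (hB : 0 < ∑ i, p i * t i) :
    η * log (∑ i, p i * t i)
      ≤ ∑ i, (p i + η) * log (1 - η + η * t i) + Fintype.card ι * (η ^ 2 / (1 - η)) := by
  set B := ∑ i, p i * t i
  set L := log (1 - η)
  set q : ι → ℝ := fun i => p i * t i / B
  have hq1 : ∑ i, q i = 1 := by rw [← Finset.sum_div, div_self hB.ne']
  have hcoord : ∀ i, (η * log B - η ^ 2 / (1 - η) - (1 + η) * L) * q i + L * p i + η * L
      ≤ (p i + η) * log (1 - η + η * t i) := fun i => by
    have hpt : p i * t i ≤ B := single_le_sum (fun j _ => mul_nonneg (hp j) (ht j)) (mem_univ i)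
    have h := softBayes_coord_bound hη0 hη1 (hp i) (ht i) hB (q := q i)
      (div_nonneg (mul_nonneg (hp i) (ht i)) hB.le) ((div_le_one hB).mpr hpt)
      (div_mul_cancel₀ _ hB.ne')
    linarith
  have hsum := sum_le_sum fun i (_ : i ∈ univ) => hcoord i
  rw [sum_add_distrib, sum_add_distrib, ← mul_sum, ← mul_sum, hq1, hp1, sum_const, card_univ,
    nsmul_eq_mul] at hsum
  have hcard : (1 : ℝ) ≤ Fintype.card ι := by
    obtain ⟨i, -⟩ := exists_ne_zero_of_sum_ne_zero (by linarith : ∑ i, p i ≠ 0)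
    exact_mod_cast Fintype.card_pos_iff.mpr ⟨i⟩
  have hL := mul_le_mul_of_nonneg_left (neg_div_one_sub_le_log_one_sub hη1)
    (mul_nonneg (sub_nonneg.mpr hcard) hη0.le)
  have e : ((Fintype.card ι : ℝ) - 1) * η * -(η / (1 - η))
      = η ^ 2 / (1 - η) - Fintype.card ι * (η ^ 2 / (1 - η)) := by ring
  linarith

theorem log_sum_le_softBayes {ι : Type*} [Fintype ι] (hη0 : 0 < η) (hη1 : η < 1)
    {p t : ι → ℝ} (hp : ∀ i, 0 ≤ p i) (hp1 : ∑ i, p i = 1) (ht : ∀ i, 0 ≤ t i)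
    (hB : 0 < ∑ i, p i * t i) :
    log (∑ i, p i * t i) ≤ 1 / η * ∑ i, p i * log (1 - η + η * t i)
      + ∑ i, log (1 - η + η * t i) + Fintype.card ι * η / (1 - η) := by
  have h1η : 1 - η ≠ 0 := (sub_pos.mpr hη1).ne'
  refine le_of_mul_le_mul_left ?_ hη0
  calc η * log (∑ i, p i * t i)
      ≤ ∑ i, (p i + η) * log (1 - η + η * t i) + Fintype.card ι * (η ^ 2 / (1 - η)) :=
        mul_log_sum_le_softBayes hη0 hη1 hp hp1 ht hB
    _ = η * (1 / η * ∑ i, p i * log (1 - η + η * t i) + ∑ i, log (1 - η + η * t i)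
        + Fintype.card ι * η / (1 - η)) := by
        simp only [add_mul, sum_add_distrib, ← mul_sum]
        field_simp

end SoftBayesScalar

theorem qsoftbayes_one_step_regret_general (D : ℕ) (η : ℝ) (hη0 : 0 < η) (hη1 : η < 1)
    (W A : Matrix (Fin D) (Fin D) ℂ)
    (hA : A.PosSemidef)
    (ρt : Matrix (Fin D) (Fin D) ℂ)
    (hpos : 0 < ((A * ρt).trace).re)
    (W' : Matrix (Fin D) (Fin D) ℂ)
    (hW' : W' = matExp (matLog W +
      matLog ((((1 - η : ℝ)) : ℂ) • 1 + (((η / ((A * ρt).trace).re : ℝ)) : ℂ) • A)))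
    (ρ : Matrix (Fin D) (Fin D) ℂ) (hρ : IsDensity ρ) (hρpos : 0 < ((A * ρ).trace).re) :
    (-Real.log ((A * ρt).trace).re) - (-Real.log ((A * ρ).trace).re) ≤
      (1 / η) * ((ρ * (matLog W' - matLog W)).trace).re +
        ((matLog W' - matLog W).trace).re + D * η / (1 - η) := by
  set c := ((A * ρt).trace).re
  have hAh : A.IsHermitian := hA.1
  set g : ℝ → ℝ := fun x => (1 - η) + η / c * x
  have hM : (((1 - η : ℝ)) : ℂ) • 1 + (((η / c : ℝ)) : ℂ) • A = cfc g A :=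
    (hAh.cfc_const_add_mul _ _).symm
  have hlog : matLog W' - matLog W = cfc (Real.log ∘ g) A := by
    rw [hW', matLog_matExp ((isHermitian_matLog _).add (isHermitian_matLog _)),
      add_sub_cancel_left, hM, matLog, matFun_cfc _ _ hAh]
  have hAρ : ((A * ρ).trace).re = ∑ i, hAh.eigenWeight ρ i * hAh.eigenvalues i := by
    conv_lhs => rw [trace_mul_comm, ← cfc_id' ℝ A hAh.isSelfAdjoint]
    exact hAh.re_trace_mul_cfc ρ _
  have hB : ∑ i, hAh.eigenWeight ρ i * (hAh.eigenvalues i / c) = ((A * ρ).trace).re / c := by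
    simp only [hAρ, Finset.sum_div, mul_div_assoc]
  have hbound := log_sum_le_softBayes hη0 hη1 (t := fun i => hAh.eigenvalues i / c)
    (hAh.eigenWeight_nonneg hρ.1) (by rw [hAh.sum_eigenWeight, hρ.2]; rfl)
    (fun i => div_nonneg (hA.eigenvalues_nonneg i) hpos.le) (hB ▸ div_pos hρpos hpos)
  have hg : ∀ x, 1 - η + η * (x / c) = g x := fun x => by ring
  simp only [hg, hB, Real.log_div hρpos.ne' hpos.ne', Fintype.card_fin] at hbound
  have hρlog := hAh.re_trace_mul_cfc ρ (Real.log ∘ g)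
  have htrlog := hAh.re_trace_cfc (Real.log ∘ g)
  simp only [RCLike.re_to_complex, Function.comp_apply] at hρlog htrlog
  rw [hlog, hρlog, htrlog]
  linarith

theorem qsoftbayes_one_step_regret (D : ℕ) (η : ℝ) (hη0 : 0 < η) (hη1 : η < 1)
    (W A : Matrix (Fin D) (Fin D) ℂ) (hW : W.PosDef) (hWtr : (W.trace).re ≤ 1)
    (hA : A.PosSemidef)
    (ρt : Matrix (Fin D) (Fin D) ℂ) (hρt : ρt = (((W.trace).re)⁻¹ : ℂ) • W)
    (hpos : 0 < ((A * ρt).trace).re)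
    (W' : Matrix (Fin D) (Fin D) ℂ)
    (hW' : W' = matExp (matLog W +
      matLog ((((1 - η : ℝ)) : ℂ) • 1 + (((η / ((A * ρt).trace).re : ℝ)) : ℂ) • A)))
    (ρ : Matrix (Fin D) (Fin D) ℂ) (hρ : IsDensity ρ) (hρpos : 0 < ((A * ρ).trace).re) :
    (-Real.log ((A * ρt).trace).re) - (-Real.log ((A * ρ).trace).re) ≤
      (1 / η) * ((ρ * (matLog W' - matLog W)).trace).re +
        ((matLog W' - matLog W).trace).re + D * η / (1 - η) :=
  qsoftbayes_one_step_regret_general D η hη0 hη1 W A hA ρt hpos W' hW' ρ hρ hρpos
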